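/- arXiv:1305.6597 — 2 statements merged into one kernel-verified Lean document; each statement's English description precedes it below -/
import Mathlib

section
/- Let t be a positive integer which is not a power of 2, and let ℓ be any prime number dividing t − 2. Then the polynomial ((X+1)^t + X^t + 1)/X ∈ F_2[X] is not an ℓ-th power in K[X], where K is an algebraic closure of F_2. -/
/-! Write `t = 2 ^ v * m` with `m` odd; `m ≠ 1` since `t` is not a power of 2. In characteristic 2,
`(X + 1) ^ t + X ^ t + 1 = P ^ 2 ^ v` with `P = (X + 1) ^ m + X ^ m + 1`, and `P` has simple roots
at `0` (as `P'(0) = m = 1`) and at `1` (as `P` is invariant under `X ↦ X + 1`). Hence `Q` vanishes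
to order `2 ^ v - 1` at `0` and `2 ^ v` at `1`. Root multiplicities of an `ℓ`-th power are
divisible by `ℓ`, and no prime divides two consecutive integers. -/

open Polynomial

theorem Polynomial.rootMultiplicity_pow {R : Type*} [CommRing R] [IsDomain R] (p : R[X]) (a : R)
    (n : ℕ) : rootMultiplicity a (p ^ n) = n * rootMultiplicity a p := by
  classical
  rw [← count_roots, roots_pow, Multiset.count_nsmul, count_roots]

theorem Polynomial.rootMultiplicity_eq_one {R : Type*} [CommRing R] {p : R[X]} {a : R}
    (hp : p.IsRoot a) (hp' : ¬ (derivative p).IsRoot a) : rootMultiplicity a p = 1 := by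
  have hp0 : p ≠ 0 := by rintro rfl; simp at hp'
  have hpos := (rootMultiplicity_pos hp0).mpr hp
  have hle := mt (one_lt_rootMultiplicity_iff_isRoot hp0).mp (by tauto)
  omega

/-- In characteristic 2 this is `∑ 0 < k < t, (t.choose k) X ^ k`, the inner terms of the binomial
expansion of `(X + 1) ^ t`. -/
noncomputable def middleBinomial (R : Type*) [Semiring R] (t : ℕ) : R[X] :=
  (X + 1) ^ t + X ^ t + 1

section CharTwo

variable {R : Type*} [CommRing R] [CharP R 2]

theorem middleBinomial_two_pow_mul (v m : ℕ) :
    middleBinomial R (2 ^ v * m) = middleBinomial R m ^ 2 ^ v := by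
  simp only [middleBinomial, add_pow_char_pow, one_pow, mul_comm (2 ^ v) m, pow_mul]

theorem middleBinomial_comp_X_add_one (m : ℕ) :
    (middleBinomial R m).comp (X + 1) = middleBinomial R m := by
  have h : (X + 1 + 1 : R[X]) = X := by rw [add_assoc, CharTwo.add_self_eq_zero, add_zero]
  simp only [middleBinomial, add_comp, pow_comp, X_comp, one_comp, h]
  ring

theorem isRoot_middleBinomial_zero {m : ℕ} (hm : m ≠ 0) : (middleBinomial R m).IsRoot 0 := by
  simp [middleBinomial, zero_pow hm, CharTwo.add_self_eq_zero]

theorem eval_derivative_middleBinomial_zero {m : ℕ} (hm : Odd m) (hm1 : m ≠ 1) :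
    (derivative (middleBinomial R m)).eval 0 = 1 := by
  have h2 : (2 : R) = 0 := CharTwo.two_eq_zero
  simp [middleBinomial, derivative_pow, natCast_eq_one_of_odd_of_two_eq_zero hm h2,
    zero_pow (show m - 1 ≠ 0 by grind)]

theorem rootMultiplicity_middleBinomial_zero [Nontrivial R] {m : ℕ} (hm : Odd m) (hm1 : m ≠ 1) :
    rootMultiplicity 0 (middleBinomial R m) = 1 :=
  rootMultiplicity_eq_one (isRoot_middleBinomial_zero hm.pos.ne')
    (by simp [IsRoot, eval_derivative_middleBinomial_zero hm hm1])

theorem rootMultiplicity_middleBinomial_one [Nontrivial R] {m : ℕ} (hm : Odd m) (hm1 : m ≠ 1) :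
    rootMultiplicity 1 (middleBinomial R m) = 1 := by
  rw [rootMultiplicity_eq_rootMultiplicity, C_1, middleBinomial_comp_X_add_one,
    rootMultiplicity_middleBinomial_zero hm hm1]

theorem rootMultiplicity_of_X_mul_eq_middleBinomial [IsDomain R] {v m : ℕ} (hm : Odd m)
    (hm1 : m ≠ 1) {S : R[X]} (hS : X * S = middleBinomial R (2 ^ v * m)) :
    rootMultiplicity 0 S = 2 ^ v - 1 ∧ rootMultiplicity 1 S = 2 ^ v := by
  rw [middleBinomial_two_pow_mul] at hS
  have hP : middleBinomial R m ≠ 0 := by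
    intro h
    simpa [h] using rootMultiplicity_middleBinomial_zero (R := R) hm hm1
  have hXS : X * S ≠ 0 := hS ▸ pow_ne_zero _ hP
  have hmul (a : R) : rootMultiplicity a X + rootMultiplicity a S =
      2 ^ v * rootMultiplicity a (middleBinomial R m) := by
    rw [← rootMultiplicity_pow, ← hS, rootMultiplicity_mul hXS]
  have h0 := hmul 0
  have h1 := hmul 1
  have hX : rootMultiplicity 0 (X : R[X]) = 1 := by
    simpa using rootMultiplicity_X_sub_C_self (x := (0 : R))
  rw [rootMultiplicity_middleBinomial_zero hm hm1, hX] at h0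
  rw [rootMultiplicity_middleBinomial_one hm hm1, rootMultiplicity_eq_zero (by simp)] at h1
  omega

end CharTwo

theorem stmt_7_general (t : ℕ) (ht : 0 < t) (htn : ¬ ∃ k : ℕ, t = 2 ^ k)
    (ℓ : ℕ) (hℓ : ℓ.Prime)
    (Q : Polynomial (ZMod 2))
    (hQ : Polynomial.X * Q = (Polynomial.X + 1) ^ t + Polynomial.X ^ t + 1) :
    ¬ ∃ R : Polynomial (AlgebraicClosure (ZMod 2)),
        Q.map (algebraMap (ZMod 2) (AlgebraicClosure (ZMod 2))) = R ^ ℓ := by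
  obtain ⟨v, m, hm2, rfl⟩ := Nat.exists_eq_pow_mul_and_not_dvd ht.ne' 2 (by norm_num)
  have hm : Odd m := Nat.odd_iff.mpr (by omega)
  have hm1 : m ≠ 1 := by rintro rfl; exact htn ⟨v, mul_one _⟩
  rintro ⟨R, hR⟩
  have hXR : X * R ^ ℓ = middleBinomial _ (2 ^ v * m) := by
    simpa [← hR, middleBinomial] using congrArg (map (algebraMap (ZMod 2) _)) hQ
  obtain ⟨h0, h1⟩ := rootMultiplicity_of_X_mul_eq_middleBinomial hm hm1 hXR
  rw [rootMultiplicity_pow] at h0 h1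
  have hone : ℓ ∣ 2 ^ v - (2 ^ v - 1) :=
    Nat.dvd_sub (h1 ▸ dvd_mul_right ℓ _) (h0 ▸ dvd_mul_right ℓ _)
  rw [Nat.sub_sub_self Nat.one_le_two_pow] at hone
  exact hℓ.not_dvd_one hone

theorem stmt_7 (t : ℕ) (ht : 0 < t) (htn : ¬ ∃ k : ℕ, t = 2 ^ k)
    (ℓ : ℕ) (hℓ : ℓ.Prime) (hdvd : ℓ ∣ t - 2)
    (Q : Polynomial (ZMod 2))
    (hQ : Polynomial.X * Q = (Polynomial.X + 1) ^ t + Polynomial.X ^ t + 1) :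
    ¬ ∃ R : Polynomial (AlgebraicClosure (ZMod 2)),
        Q.map (algebraMap (ZMod 2) (AlgebraicClosure (ZMod 2))) = R ^ ℓ :=
  stmt_7_general t ht htn ℓ hℓ Q hQ
end

section
/- Let e ≥ 2 be an integer and write e = 2^b · m with m odd. Let K be an algebraic closure of F_2, and suppose that the polynomial (X^e + Y^e)/(X + Y) ∈ K[X,Y] is an s-th power in K[X,Y] for some integer s ≥ 2. Then m = 1, i.e., e is a power of 2. -/
/-!
Put `Y = 1`. In characteristic two, `X ^ (2 ^ b * m) + 1 = (X ^ m - 1) ^ (2 ^ b)` and `X ^ m - 1`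
is separable for odd `m`, so the quotient `p = (X ^ e + 1) / (X + 1)` vanishes to order
`2 ^ b - 1` at `1` and to order `2 ^ b` at any other `m`-th root of unity `ζ`, which exists once
`m ≠ 1`. If `p = r ^ s`, then `s` divides both orders, hence divides `1`.
-/

open MvPolynomial

namespace Polynomial

theorem rootMultiplicity_pow_s13 {R : Type*} [CommRing R] [IsDomain R] (p : R[X]) (a : R) (n : ℕ) :
    (p ^ n).rootMultiplicity a = n * p.rootMultiplicity a := by
  classical
  rw [← count_roots, ← count_roots, roots_pow, Multiset.count_nsmul]

theorem Separable.rootMultiplicity_eq_one {R : Type*} [CommRing R] [IsDomain R] {q : R[X]}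
    (hq : q.Separable) {a : R} (ha : q.IsRoot a) : q.rootMultiplicity a = 1 :=
  le_antisymm (rootMultiplicity_le_one_of_separable hq a)
    ((rootMultiplicity_pos hq.ne_zero).mpr ha)

theorem eq_one_of_X_sub_C_mul_pow_eq_pow {R : Type*} [CommRing R] [IsDomain R] {q r : R[X]}
    (hq : q.Separable) {a ζ : R} (ha : q.IsRoot a) (hζ : q.IsRoot ζ) (hζa : ζ ≠ a) {s n : ℕ}
    (h : (X - C a) * r ^ s = q ^ n) : s = 1 := by
  classical
  have hne : (X - C a) * r ^ s ≠ 0 := h ▸ pow_ne_zero n hq.ne_zero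
  have multiplicity_at (x : R) (hx : q.IsRoot x) :
      (X - C a).rootMultiplicity x + s * r.rootMultiplicity x = n := by
    rw [← rootMultiplicity_pow_s13, ← rootMultiplicity_mul hne, h, rootMultiplicity_pow_s13,
      hq.rootMultiplicity_eq_one hx, mul_one]
  have at_a := multiplicity_at a ha
  have at_ζ := multiplicity_at ζ hζ
  rw [rootMultiplicity_X_sub_C_self] at at_a
  rw [rootMultiplicity_X_sub_C, if_neg hζa, zero_add] at at_ζ
  refine Nat.dvd_one.mp ((Nat.dvd_add_left (dvd_mul_right s (r.rootMultiplicity a))).mp ?_)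
  rw [at_a, ← at_ζ]
  exact dvd_mul_right s _

theorem X_pow_two_pow_mul_add_one {K : Type*} [CommRing K] [CharP K 2] (b m : ℕ) :
    (X : K[X]) ^ (2 ^ b * m) + 1 = (X ^ m - 1) ^ 2 ^ b := by
  rw [sub_pow_char_pow, ← pow_mul, one_pow, CharTwo.sub_eq_add, mul_comm]

end Polynomial

open Polynomial in
theorem stmt_13_general (e : ℕ) (b m : ℕ) (hm : Odd m) (hem : e = 2 ^ b * m)
    (P : MvPolynomial (Fin 2) (AlgebraicClosure (ZMod 2)))
    (hP : (MvPolynomial.X 0 + MvPolynomial.X 1) * P =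
        (MvPolynomial.X 0) ^ e + (MvPolynomial.X 1) ^ e)
    (s : ℕ) (hs : 2 ≤ s)
    (R : MvPolynomial (Fin 2) (AlgebraicClosure (ZMod 2))) (hR : P = R ^ s) :
    m = 1 := by
  set K := AlgebraicClosure (ZMod 2)
  by_contra hm1
  have hm_gt : 1 < m := by have := hm.pos; omega
  have hmK : (m : K) ≠ 0 := by
    rwa [Ne, CharP.cast_eq_zero_iff K 2, ← even_iff_two_dvd, Nat.not_even_iff_odd]
  have : NeZero (m : K) := ⟨hmK⟩
  obtain ⟨ζ, hζ⟩ := HasEnoughRootsOfUnity.exists_primitiveRoot K m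
  let φ := MvPolynomial.aeval (R := K) ![(Polynomial.X : K[X]), 1]
  have hspec : (Polynomial.X - Polynomial.C 1) * φ R ^ s =
      (Polynomial.X ^ m - Polynomial.C 1) ^ 2 ^ b := by
    rw [Polynomial.C_1, ← X_pow_two_pow_mul_add_one, ← hem, CharTwo.sub_eq_add, ← map_pow, ← hR]
    simpa [φ] using congrArg φ hP
  refine (by omega : s ≠ 1) (eq_one_of_X_sub_C_mul_pow_eq_pow (ζ := ζ)
    (separable_X_pow_sub_C 1 hmK one_ne_zero) ?_ ?_ (hζ.ne_one hm_gt) hspec)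
  · simp [IsRoot]
  · simp [IsRoot, hζ.pow_eq_one]

theorem stmt_13 (e : ℕ) (he : 2 ≤ e) (b m : ℕ) (hm : Odd m) (hem : e = 2 ^ b * m)
    (P : MvPolynomial (Fin 2) (AlgebraicClosure (ZMod 2)))
    (hP : (MvPolynomial.X 0 + MvPolynomial.X 1) * P =
        (MvPolynomial.X 0) ^ e + (MvPolynomial.X 1) ^ e)
    (s : ℕ) (hs : 2 ≤ s)
    (R : MvPolynomial (Fin 2) (AlgebraicClosure (ZMod 2))) (hR : P = R ^ s) :
    m = 1 :=
  stmt_13_general e b m hm hem P hP s hs R hR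
end
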